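/- arXiv:2409.11903 — 2 statements merged into one kernel-verified Lean document; each statement's English description precedes it below -/
import Mathlib

section
/- Let B¹¹ ∈ ℝ^{m×m}, ů ∈ L^1(0,1; ℝ^m), λ ∈ ℂ with Re λ > log‖B¹¹‖. Define u(x,t) := (B¹¹)^n ů(n−t+x) for 0 < n−t+x < 1 (n ∈ ℕ∪{0}), extended suitably. Then for x ∈ (0,1): ∫₀^∞ e^{−λt} u(x,t) dt = ∫₀^x e^{−λ(x−s)} ů(s) ds + e^{−λx} ∑_{n=0}^∞ (B¹¹)^{n+1} e^{−λn} ∫₀^1 e^{−λ(1−s)} ů(s) ds, where the series converges absolutely. -/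
/-!
Along characteristics, `f` agrees on `(x + n - 1, x + n)` with `T ^ n` applied to the
reflected datum `g (x + n - t)`. Split `(0, ∞)` into `(0, x]` and the unit intervals
`(x + n, x + n + 1]`; after the substitution `s = x + n + 1 - t` the piece over
`(x + n, x + n + 1]` is `e^{-λ(x + n)} T^{n+1} ∫₀¹ e^{-λ(1-s)} g s`. The norms of the pieces are
dominated by a geometric series of ratio `‖T‖ e^{-Re λ} < 1`, so the Laplace integral exists and
is the sum of the pieces.
-/

open Matrix MeasureTheory Set
open scoped Complex
attribute [local instance] Matrix.linftyOpNormedRing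

section NatIntervals

variable {α : Type*} [Field α] [LinearOrder α] [IsStrictOrderedRing α]

theorem iUnion_Ioc_add_natCast_eq_Ioi [Archimedean α] (a : α) :
    ⋃ n : ℕ, Ioc (a + n) (a + n + 1) = Ioi a := by
  refine Subset.antisymm (iUnion_subset fun n t ht => ?_) fun t ht => ?_
  · exact lt_of_le_of_lt (le_add_of_nonneg_right n.cast_nonneg) ht.1
  · obtain ⟨n, hn⟩ := mem_iUnion.mp ((iUnion_Ioc_add_intCast a).symm ▸ mem_univ t)
    have hn0 : (0 : α) < n + 1 := by linarith [hn.2, mem_Ioi.mp ht]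
    have hn1 : (0 : ℤ) < n + 1 := by exact_mod_cast hn0
    lift n to ℕ using by omega
    exact mem_iUnion.mpr ⟨n, by simpa using hn⟩

theorem pairwise_disjoint_Ioc_add_natCast (a : α) :
    Pairwise (Function.onFun Disjoint fun n : ℕ => Ioc (a + n) (a + n + 1)) := by
  intro i j hij
  simpa using pairwise_disjoint_Ioc_add_intCast a (Nat.cast_injective.ne hij : (i : ℤ) ≠ j)

end NatIntervals

section IntervalPieces

variable {E : Type*} [NormedAddCommGroup E] {μ : Measure ℝ} {f : ℝ → E} {a : ℝ}

theorem integrableOn_Ioi_of_summable_intervalIntegral_norm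
    (hf : ∀ n : ℕ, IntervalIntegrable f μ (a + n) (a + n + 1))
    (hs : Summable fun n : ℕ => ∫ t in a + n..a + n + 1, ‖f t‖ ∂μ) :
    IntegrableOn f (Ioi a) μ := by
  simp_rw [intervalIntegral.integral_of_le (le_add_of_nonneg_right zero_le_one)] at hs
  rw [← iUnion_Ioc_add_natCast_eq_Ioi]
  exact integrableOn_iUnion_of_summable_integral_norm (fun n => (hf n).1) hs

theorem MeasureTheory.IntegrableOn.hasSum_intervalIntegral_Ioi [NormedSpace ℝ E]
    (hfi : IntegrableOn f (Ioi a) μ) :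
    HasSum (fun n : ℕ => ∫ t in a + n..a + n + 1, f t ∂μ) (∫ t in Ioi a, f t ∂μ) := by
  simp_rw [intervalIntegral.integral_of_le (le_add_of_nonneg_right zero_le_one)]
  rw [← iUnion_Ioc_add_natCast_eq_Ioi] at hfi ⊢
  exact hasSum_integral_iUnion (fun _ => measurableSet_Ioc)
    (pairwise_disjoint_Ioc_add_natCast a) hfi

end IntervalPieces

section ExpWeight

variable {E : Type*} [NormedAddCommGroup E] [NormedSpace ℂ E]

theorem norm_cexp_neg_mul_ofReal (lam : ℂ) (t : ℝ) :
    ‖cexp (-lam * t)‖ = Real.exp (-lam.re * t) := by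
  simp [Complex.norm_exp]

theorem intervalIntegral_cexp_smul_comp_sub_left (lam : ℂ) (h : ℝ → E) (a b c d : ℝ) :
    ∫ t in a..b, cexp (-lam * t) • h (c - t)
      = cexp (-lam * (c - d)) • ∫ s in c - b..c - a, cexp (-lam * (d - s)) • h s := by
  rw [← intervalIntegral.integral_smul, ← intervalIntegral.integral_comp_sub_left]
  refine intervalIntegral.integral_congr fun t _ => ?_
  simp only [smul_smul, ← Complex.exp_add]
  push_cast
  ring_nf

theorem IntervalIntegrable.cexp_smul_comp_sub_left {h : ℝ → E} {a b : ℝ}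
    (hh : IntervalIntegrable h volume a b) (lam : ℂ) (c : ℝ) :
    IntervalIntegrable (fun t => cexp (-lam * t) • h (c - t)) volume (c - a) (c - b) :=
  (hh.comp_sub_left c).continuousOn_smul (by fun_prop)

theorem intervalIntegral_norm_cexp_smul_comp_sub_left_le {h : ℝ → E}
    (hh : IntervalIntegrable h volume 0 1) (lam : ℂ) (c : ℝ) :
    ∫ t in c - 1..c, ‖cexp (-lam * t) • h (c - t)‖
      ≤ Real.exp |lam.re| * Real.exp (-lam.re * c) * ∫ s in 0..1, ‖h s‖ := by
  have hweight : ∀ s ∈ Icc (0 : ℝ) 1, ‖cexp (-lam * (c - s)) • h s‖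
      ≤ Real.exp |lam.re| * Real.exp (-lam.re * c) * ‖h s‖ := by
    intro s ⟨hs0, hs1⟩
    rw [norm_smul, ← Complex.ofReal_sub, norm_cexp_neg_mul_ofReal, ← Real.exp_add]
    gcongr
    nlinarith [le_abs_self lam.re, abs_nonneg lam.re]
  calc ∫ t in c - 1..c, ‖cexp (-lam * t) • h (c - t)‖
      = ∫ s in (0 : ℝ)..1, ‖cexp (-lam * (c - s)) • h s‖ := by
        simpa using intervalIntegral.integral_comp_sub_left
          (fun s => ‖cexp (-lam * (c - s)) • h s‖) c (a := c - 1) (b := c)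
    _ ≤ ∫ s in (0 : ℝ)..1, Real.exp |lam.re| * Real.exp (-lam.re * c) * ‖h s‖ :=
        intervalIntegral.integral_mono_on zero_le_one
          (hh.continuousOn_smul (by fun_prop)).norm (hh.norm.const_mul _) hweight
    _ = _ := intervalIntegral.integral_const_mul _ _

end ExpWeight

section Feedback

variable {E : Type*} [NormedAddCommGroup E] [NormedSpace ℂ E] {g f : ℝ → E} {lam : ℂ}

theorem intervalIntegrable_cexp_smul_of_eqOn (L : E →L[ℂ] E) {b c : ℝ} (hb : 0 ≤ b)
    (hg : IntervalIntegrable g volume 0 b)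
    (hf : EqOn f (fun t => L (g (c - t))) (Ioo (c - b) c)) :
    IntervalIntegrable (fun t => cexp (-lam * t) • f t) volume (c - b) c := by
  have hLg : IntervalIntegrable (fun t => L (cexp (-lam * t) • g (c - t))) volume c (c - b) := by
    simpa using intervalIntegrable_iff.mpr
      (L.integrable_comp (intervalIntegrable_iff.mp (hg.cexp_smul_comp_sub_left lam c)))
  refine hLg.symm.congr_uIoo fun t ht => ?_
  rw [uIoo_of_le (by linarith)] at ht
  simp [hf ht]

theorem intervalIntegral_cexp_smul_of_eqOn [CompleteSpace E] (L : E →L[ℂ] E) {b c : ℝ}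
    (hb : 0 ≤ b) (hg : IntervalIntegrable g volume 0 b)
    (hf : EqOn f (fun t => L (g (c - t))) (Ioo (c - b) c)) (d : ℝ) :
    ∫ t in c - b..c, cexp (-lam * t) • f t
      = cexp (-lam * (c - d)) • L (∫ s in 0..b, cexp (-lam * (d - s)) • g s) := by
  have hfL : EqOn (fun t : ℝ => cexp (-lam * t) • f t)
      (fun t => L (cexp (-lam * t) • g (c - t))) (Ioo (c - b) c) := fun t ht => by simp [hf ht]
  have hgc := (hg.cexp_smul_comp_sub_left lam c).symm
  rw [sub_zero] at hgc
  rw [intervalIntegral.integral_congr_Ioo_of_le (by linarith) hfL,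
    L.intervalIntegral_comp_comm hgc, intervalIntegral_cexp_smul_comp_sub_left lam g (c - b) c c d,
    sub_sub_cancel, sub_self, L.map_smul]

theorem intervalIntegral_norm_cexp_smul_of_eqOn_le (L : E →L[ℂ] E) {c : ℝ}
    (hg : IntervalIntegrable g volume 0 1)
    (hf : EqOn f (fun t => L (g (c - t))) (Ioo (c - 1) c)) :
    ∫ t in c - 1..c, ‖cexp (-lam * t) • f t‖
      ≤ ‖L‖ * (Real.exp |lam.re| * Real.exp (-lam.re * c) * ∫ s in 0..1, ‖g s‖) := by
  have hfL : EqOn (fun t : ℝ => ‖cexp (-lam * t) • f t‖)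
      (fun t => ‖L (cexp (-lam * t) • g (c - t))‖) (Ioo (c - 1) c) := fun t ht => by
    simp [hf ht]
  have hgc := (hg.cexp_smul_comp_sub_left lam c).symm
  rw [sub_zero] at hgc
  calc ∫ t in c - 1..c, ‖cexp (-lam * t) • f t‖
      = ∫ t in c - 1..c, ‖L (cexp (-lam * t) • g (c - t))‖ :=
        intervalIntegral.integral_congr_Ioo_of_le (by linarith) hfL
    _ ≤ ∫ t in c - 1..c, ‖L‖ * ‖cexp (-lam * t) • g (c - t)‖ :=
        intervalIntegral.integral_mono_on (by linarith)
          (intervalIntegrable_iff.mpr (L.integrable_comp (intervalIntegrable_iff.mp hgc))).norm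
          (hgc.norm.const_mul _) fun t _ => L.le_opNorm _
    _ ≤ _ := by
        rw [intervalIntegral.integral_const_mul]
        exact mul_le_mul_of_nonneg_left
          (intervalIntegral_norm_cexp_smul_comp_sub_left_le hg lam c) (norm_nonneg L)

theorem summable_mul_exp_neg_pow {r c : ℝ} (hr0 : 0 ≤ r) (hr : r < Real.exp c) :
    Summable fun n : ℕ => (r * Real.exp (-c)) ^ n := by
  refine summable_geometric_of_lt_one (by positivity) ?_
  rwa [Real.exp_neg, ← div_eq_mul_inv, div_lt_one (Real.exp_pos c)]

theorem summable_norm_cexp_smul_pow_succ_apply (T : E →L[ℂ] E) (hT : ‖T‖ < Real.exp lam.re)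
    (v : E) : Summable fun n : ℕ => ‖cexp (-lam * n) • (T ^ (n + 1)) v‖ := by
  refine Summable.of_nonneg_of_le (fun n => norm_nonneg _) (fun n => ?_)
    ((summable_mul_exp_neg_pow (norm_nonneg T) hT).mul_left (‖T‖ * ‖v‖))
  calc ‖cexp (-lam * n) • (T ^ (n + 1)) v‖
      ≤ Real.exp (-lam.re) ^ n * (‖T‖ ^ (n + 1) * ‖v‖) := by
        rw [norm_smul, ← Complex.ofReal_natCast, norm_cexp_neg_mul_ofReal,
          mul_comm (-lam.re), Real.exp_nat_mul]
        gcongr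
        exact ((T ^ (n + 1)).le_opNorm v).trans (by gcongr; exact norm_pow_le' T n.succ_pos)
    _ = ‖T‖ * ‖v‖ * (‖T‖ * Real.exp (-lam.re)) ^ n := by ring

-- `f t` is the value at position `x` and time `t` of the solution of `∂ₜu + ∂ₓu = 0` on `(0, 1)`
-- with `u(·, 0) = g` and boundary feedback `u(0, t) = T u(1, t)`.
def IsFeedbackProfile (T : E →L[ℂ] E) (g : ℝ → E) (x : ℝ) (f : ℝ → E) : Prop :=
  ∀ (t : ℝ) (n : ℕ), 0 < n - t + x → n - t + x < 1 → f t = (T ^ n) (g (n - t + x))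

variable {T : E →L[ℂ] E} {x : ℝ}

theorem IsFeedbackProfile.eqOn_pow_apply (hf : IsFeedbackProfile T g x f) {n : ℕ} {c : ℝ}
    (hc : c = x + n) :
    EqOn f (fun t => (T ^ n) (g (c - t))) (Ioo (c - 1) c) := fun t ht => by
  rw [hf t n (by linarith [ht.2]) (by linarith [ht.1])]
  exact congrArg (fun s => (T ^ n) (g s)) (by rw [hc]; ring)

theorem IsFeedbackProfile.integrableOn_Ioi_cexp_smul (hf : IsFeedbackProfile T g x f)
    (hg : IntervalIntegrable g volume 0 1) (hT : ‖T‖ < Real.exp lam.re) :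
    IntegrableOn (fun t : ℝ => cexp (-lam * t) • f t) (Ioi x) := by
  have hpiece (n : ℕ) := hf.eqOn_pow_apply (n := n + 1) (c := x + n + 1)
    (by push_cast; ring)
  have hint (n : ℕ) : IntervalIntegrable (fun t : ℝ => cexp (-lam * t) • f t) volume
      (x + n) (x + n + 1) := by
    simpa using intervalIntegrable_cexp_smul_of_eqOn _ zero_le_one hg (hpiece n)
  have hgeo := ((summable_nat_add_iff 1).mpr (summable_mul_exp_neg_pow (norm_nonneg T) hT)).mul_left
    (Real.exp |lam.re| * Real.exp (-lam.re * x) * ∫ s in 0..1, ‖g s‖)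
  refine integrableOn_Ioi_of_summable_intervalIntegral_norm hint ?_
  refine Summable.of_nonneg_of_le (fun n => intervalIntegral.integral_nonneg (by linarith)
    fun _ _ => norm_nonneg _) (fun n => ?_) hgeo
  have hexp : Real.exp (-lam.re * (x + n + 1))
      = Real.exp (-lam.re * x) * Real.exp (-lam.re) ^ (n + 1) := by
    rw [← Real.exp_nat_mul, ← Real.exp_add]; push_cast; ring_nf
  calc ∫ t in x + n..x + n + 1, ‖cexp (-lam * t) • f t‖
      ≤ ‖T ^ (n + 1)‖ * (Real.exp |lam.re| * Real.exp (-lam.re * (x + n + 1))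
          * ∫ s in 0..1, ‖g s‖) := by
        simpa using intervalIntegral_norm_cexp_smul_of_eqOn_le (lam := lam) _ hg (hpiece n)
    _ ≤ ‖T‖ ^ (n + 1) * (Real.exp |lam.re| * Real.exp (-lam.re * (x + n + 1))
          * ∫ s in 0..1, ‖g s‖) := by
        exact mul_le_mul_of_nonneg_right (norm_pow_le' T n.succ_pos) (mul_nonneg (by positivity)
          (intervalIntegral.integral_nonneg zero_le_one fun _ _ => norm_nonneg _))
    _ = _ := by rw [hexp]; ring

theorem IsFeedbackProfile.integral_Ioi_cexp_smul_eq [CompleteSpace E]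
    (hf : IsFeedbackProfile T g x f) (hg : IntervalIntegrable g volume 0 1)
    (hT : ‖T‖ < Real.exp lam.re) (hx : x ∈ Ioo 0 1) :
    ∫ t in Ioi (0 : ℝ), cexp (-lam * t) • f t
      = (∫ s in 0..x, cexp (-lam * (x - s)) • g s)
        + cexp (-lam * x) • ∑' n : ℕ, cexp (-lam * n) •
          (T ^ (n + 1)) (∫ s in 0..1, cexp (-lam * (1 - s)) • g s) := by
  have hg0 : IntervalIntegrable g volume 0 x :=
    hg.mono_set (uIcc_subset_uIcc left_mem_uIcc (by simp [uIcc_of_le, hx.1.le, hx.2.le]))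
  have hpiece0 : EqOn f (fun t => (T ^ 0) (g (x - t))) (Ioo (x - x) x) := by
    refine (hf.eqOn_pow_apply (n := 0) (c := x) (by simp)).mono
      (Ioo_subset_Ioo ?_ ?_) <;> linarith [hx.2]
  have hpiece (n : ℕ) := hf.eqOn_pow_apply (n := n + 1) (c := x + n + 1)
    (by push_cast; ring)
  have hIoi := hf.integrableOn_Ioi_cexp_smul (lam := lam) hg hT
  rw [← intervalIntegral.integral_interval_add_Ioi'
    (by simpa using intervalIntegrable_cexp_smul_of_eqOn _ hx.1.le hg0 hpiece0) hIoi,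
    ← hIoi.hasSum_intervalIntegral_Ioi.tsum_eq, ← tsum_const_smul'']
  congr 1
  · simpa using intervalIntegral_cexp_smul_of_eqOn _ hx.1.le hg0 hpiece0 x
  · refine tsum_congr fun n => ?_
    have hn := intervalIntegral_cexp_smul_of_eqOn _ zero_le_one hg (hpiece n) 1 (lam := lam)
    simp only [add_sub_cancel_right, Complex.ofReal_add, Complex.ofReal_natCast,
      Complex.ofReal_one] at hn
    rw [hn, smul_smul, ← Complex.exp_add]
    congr 2
    ring

end Feedback

theorem Matrix.linfty_opNorm_map_ofReal {n : Type*} [Fintype n] [DecidableEq n]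
    (A : Matrix n n ℝ) :
    ‖A.map (Complex.ofReal ·)‖ = ‖A‖ := by
  simp [linfty_opNorm_def]

theorem Matrix.mk_mulVecLin_pow_apply {n 𝕜 : Type*} [Fintype n] [DecidableEq n]
    [NontriviallyNormedField 𝕜] (A : Matrix n n 𝕜) (k : ℕ) (w : n → 𝕜) :
    (ContinuousLinearMap.mk (mulVecLin A) ^ k) w = (A ^ k) *ᵥ w := by
  induction k generalizing w with
  | zero => simp
  | succ k ih => rw [pow_succ, mul_apply_eq_comp, ih, pow_succ, ← mulVec_mulVec]; rfl

theorem laplace_transform_u_free_part (m : ℕ) (B11 : Matrix (Fin m) (Fin m) ℝ)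
    (u0 : ℝ → Fin m → ℝ) (hu0 : MeasureTheory.IntegrableOn u0 (Set.Ioo 0 1))
    (lam : ℂ) (hlam : Real.log ‖B11‖ < lam.re)
    (u : ℝ → ℝ → Fin m → ℝ)
    (hu : ∀ (x t : ℝ) (n : ℕ), 0 < (n : ℝ) - t + x → (n : ℝ) - t + x < 1 →
      u x t = (B11 ^ n) *ᵥ u0 ((n : ℝ) - t + x))
    (x : ℝ) (hx : x ∈ Set.Ioo (0 : ℝ) 1) :
    (Summable fun n : ℕ =>
      ‖Complex.exp (-lam * n) •
        (((B11 ^ (n + 1)).map (Complex.ofReal ·)) *ᵥ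
          (∫ s in (0 : ℝ)..1, Complex.exp (-lam * (1 - s)) • (fun i => ((u0 s i : ℝ) : ℂ))))‖) ∧
    (∫ t in Set.Ioi (0 : ℝ), Complex.exp (-lam * t) • (fun i => ((u x t i : ℝ) : ℂ)))
      = (∫ s in (0 : ℝ)..x, Complex.exp (-lam * (x - s)) • (fun i => ((u0 s i : ℝ) : ℂ)))
        + Complex.exp (-lam * x) •
          ∑' n : ℕ, Complex.exp (-lam * n) •
            (((B11 ^ (n + 1)).map (Complex.ofReal ·)) *ᵥ
              (∫ s in (0 : ℝ)..1, Complex.exp (-lam * (1 - s)) • (fun i => ((u0 s i : ℝ) : ℂ)))) := by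
  obtain ⟨T, hT_pow, hT_norm⟩ : ∃ T : (Fin m → ℂ) →L[ℂ] (Fin m → ℂ),
      (∀ k w, (T ^ k) w = (B11 ^ k).map (Complex.ofReal ·) *ᵥ w) ∧ ‖T‖ = ‖B11‖ :=
    ⟨ContinuousLinearMap.mk (mulVecLin (B11.map (Complex.ofReal ·))),
      fun k w => by
        rw [mk_mulVecLin_pow_apply]
        exact congrArg (· *ᵥ w) (map_pow Complex.ofRealHom.mapMatrix B11 k).symm,
      by rw [← linfty_opNorm_eq_opNorm, linfty_opNorm_map_ofReal]⟩
  have hT : ‖T‖ < Real.exp lam.re := by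
    rcases (norm_nonneg B11).eq_or_lt with h | h
    · exact hT_norm ▸ h ▸ Real.exp_pos _
    · exact hT_norm ▸ (Real.log_lt_iff_lt_exp h).mp hlam
  have hv0 : IntervalIntegrable (fun s i => (u0 s i : ℂ)) volume 0 1 :=
    (intervalIntegrable_iff_integrableOn_Ioo_of_le zero_le_one).mpr
      (integrable_pi_iff.mpr fun i => (integrable_pi_iff.mp hu0 i).ofReal)
  have hf : IsFeedbackProfile T (fun s i => (u0 s i : ℂ)) x (fun t i => (u x t i : ℂ)) := by
    intro t n h0 h1
    ext i
    dsimp only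
    rw [hT_pow, hu x t n h0 h1]
    exact RingHom.map_mulVec Complex.ofRealHom _ _ i
  refine ⟨?_, ?_⟩
  · simpa only [hT_pow] using summable_norm_cexp_smul_pow_succ_apply T hT _
  · simpa only [hT_pow] using hf.integral_Ioi_cexp_smul_eq hv0 hT hx
end

section
/- Let B¹¹ ∈ ℝ^{m×m}, B¹² ∈ ℝ^{m×r}, ẘ ∈ L^1(0,∞; ℝ^r), λ ∈ ℂ with Re λ > max(0, log‖B¹¹‖), and fix x ∈ (0,1). Define F(t) := ∑_{k=0}^{n−1} (B¹¹)^k B¹² ẘ(t−x−k) for t ∈ (n+x−1, n+x), n ∈ ℕ∪{0} (with the empty sum equal to 0). Then ∫₀^∞ e^{−λt} F(t) dt = e^{−λx} ∑_{k=0}^∞ e^{−λk} (B¹¹)^k B¹² ∫₀^∞ e^{−λs} ẘ(s) ds. -/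
/-!
On `(n + x - 1, n + x)` the feedback term is `∑_{k<n} B₁₁ᵏ B₁₂ ẘ(t - x - k)`, so almost everywhere
on `(0, ∞)` it is the series over `k` of the inputs `B₁₁ᵏ B₁₂ ẘ` delayed by `x + k` (and vanishing
before that time). A delay by `c ≥ 0` multiplies the Laplace transform by `e^{-λc}`, and the
summand `k` has `L¹`-norm at most `‖B₁₁‖ᵏ ‖B₁₂‖ e^{-Re λ (x + k)} ‖ẘ‖₁`, which is summable because
`Re λ > log ‖B₁₁‖`; so the integral commutes with the series.
-/

open Matrix MeasureTheory Set
attribute [local instance] Matrix.linftyOpNormedRing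

section Delay

variable {E : Type*}

noncomputable def causalDelay [Zero E] (c : ℝ) (u : ℝ → E) (t : ℝ) : E :=
  (Ioi 0).indicator u (t - c)

variable {c t : ℝ}

lemma causalDelay_of_le [Zero E] (u : ℝ → E) (h : t ≤ c) : causalDelay c u t = 0 :=
  indicator_of_notMem (by simpa using h) u

lemma causalDelay_of_lt [Zero E] (u : ℝ → E) (h : c < t) : causalDelay c u t = u (t - c) :=
  indicator_of_mem (by simpa using h) u

variable [NormedAddCommGroup E]

lemma norm_causalDelay (u : ℝ → E) : ‖causalDelay c u t‖ = causalDelay c (‖u ·‖) t :=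
  norm_indicator_eq_indicator_norm u _

lemma MeasureTheory.IntegrableOn.causalDelay {u : ℝ → E} (hu : IntegrableOn u (Ioi 0)) (c : ℝ) :
    IntegrableOn (causalDelay c u) (Ioi 0) :=
  ((hu.integrable_indicator measurableSet_Ioi).comp_sub_right c).integrableOn

lemma integral_Ioi_causalDelay [NormedSpace ℝ E] (hc : 0 ≤ c) (u : ℝ → E) :
    ∫ t in Ioi (0 : ℝ), causalDelay c u t = ∫ t in Ioi (0 : ℝ), u t := by
  rw [setIntegral_eq_integral_of_forall_compl_eq_zero fun t ht ↦
      causalDelay_of_le u (by simp at ht; linarith)]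
  exact (integral_sub_right_eq_self ((Ioi 0).indicator u) c).trans
    (integral_indicator measurableSet_Ioi)

end Delay

section Laplace

variable {E G : Type*} [NormedAddCommGroup E] [NormedSpace ℂ E]
  [NormedAddCommGroup G] [NormedSpace ℂ G] {s : ℂ} {u : ℝ → E}

noncomputable def laplaceTransform (u : ℝ → E) (s : ℂ) : E :=
  ∫ t in Ioi (0 : ℝ), Complex.exp (-s * t) • u t

lemma norm_cexp_neg_mul_le_one (hs : 0 ≤ s.re) {t : ℝ} (ht : 0 ≤ t) :
    ‖Complex.exp (-s * t)‖ ≤ 1 := by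
  rw [Complex.norm_exp, Real.exp_le_one_iff]
  simpa using mul_nonneg hs ht

lemma MeasureTheory.IntegrableOn.cexp_neg_mul_smul (hu : IntegrableOn u (Ioi 0)) (hs : 0 ≤ s.re) :
    IntegrableOn (fun t : ℝ ↦ Complex.exp (-s * t) • u t) (Ioi 0) :=
  hu.bdd_smul 1 (by fun_prop) <| (ae_restrict_mem measurableSet_Ioi).mono
    fun _ ht ↦ norm_cexp_neg_mul_le_one hs (le_of_lt ht)

lemma cexp_smul_causalDelay (s : ℂ) (c t : ℝ) (u : ℝ → E) :
    Complex.exp (-s * t) • causalDelay c u t =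
      causalDelay c (fun τ ↦ Complex.exp (-s * c) • Complex.exp (-s * τ) • u τ) t := by
  rcases le_or_gt t c with h | h
  · simp [causalDelay_of_le _ h]
  · rw [causalDelay_of_lt _ h, causalDelay_of_lt _ h, smul_smul, ← Complex.exp_add]
    push_cast
    ring_nf

lemma laplaceTransform_causalDelay {c : ℝ} (hc : 0 ≤ c) (u : ℝ → E) (s : ℂ) :
    laplaceTransform (causalDelay c u) s = Complex.exp (-s * c) • laplaceTransform u s := by
  simp_rw [laplaceTransform, cexp_smul_causalDelay, integral_Ioi_causalDelay hc, integral_smul]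

lemma integral_norm_cexp_smul_causalDelay_le {c : ℝ} (hc : 0 ≤ c) (hs : 0 ≤ s.re)
    (hu : IntegrableOn u (Ioi 0)) :
    ∫ t in Ioi (0 : ℝ), ‖Complex.exp (-s * t) • causalDelay c u t‖ ≤
      Real.exp (-s.re * c) * ∫ t in Ioi (0 : ℝ), ‖u t‖ := by
  have hexp : ‖Complex.exp (-s * c)‖ = Real.exp (-s.re * c) := by simp [Complex.norm_exp]
  simp_rw [cexp_smul_causalDelay, norm_causalDelay, integral_Ioi_causalDelay hc, norm_smul,
    integral_const_mul, hexp]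
  refine mul_le_mul_of_nonneg_left (setIntegral_mono_on ?_ hu.norm measurableSet_Ioi
    fun τ hτ ↦ mul_le_of_le_one_left (norm_nonneg _) (norm_cexp_neg_mul_le_one hs (le_of_lt hτ)))
    (Real.exp_nonneg _)
  simpa only [IntegrableOn, norm_smul] using (hu.cexp_neg_mul_smul hs).norm

lemma ContinuousLinearMap.laplaceTransform_comp [CompleteSpace E] [CompleteSpace G]
    (T : E →L[ℂ] G) (hu : IntegrableOn (fun t : ℝ ↦ Complex.exp (-s * t) • u t) (Ioi 0)) :
    laplaceTransform (fun t ↦ T (u t)) s = T (laplaceTransform u s) := by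
  simp_rw [laplaceTransform, ← T.map_smul]
  exact T.integral_comp_comm hu

lemma laplaceTransform_tsum [CompleteSpace E] {ι : Type*} [Countable ι] {f : ι → ℝ → E}
    (hf : ∀ k, IntegrableOn (fun t : ℝ ↦ Complex.exp (-s * t) • f k t) (Ioi 0))
    (hsum : Summable fun k ↦ ∫ t in Ioi (0 : ℝ), ‖Complex.exp (-s * t) • f k t‖) :
    laplaceTransform (fun t ↦ ∑' k, f k t) s = ∑' k, laplaceTransform (f k) s := by
  simp_rw [laplaceTransform, ← tsum_const_smul'']
  exact (integral_tsum_of_summable_integral_norm hf hsum).symm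

theorem laplaceTransform_tsum_causalDelay [CompleteSpace E] [CompleteSpace G] {ι : Type*}
    [Countable ι] (T : ι → E →L[ℂ] G) {c : ι → ℝ} (hc : ∀ k, 0 ≤ c k) (hs : 0 ≤ s.re)
    (hu : IntegrableOn u (Ioi 0)) (hsum : Summable fun k ↦ ‖T k‖ * Real.exp (-s.re * c k)) :
    laplaceTransform (fun t ↦ ∑' k, causalDelay (c k) (fun τ ↦ T k (u τ)) t) s =
      ∑' k, Complex.exp (-s * c k) • T k (laplaceTransform u s) := by
  have hTu (k : ι) : IntegrableOn (fun τ ↦ T k (u τ)) (Ioi 0) := (T k).integrable_comp hu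
  have hnorm (k : ι) : ∫ t in Ioi (0 : ℝ), ‖T k (u t)‖ ≤ ‖T k‖ * ∫ t in Ioi (0 : ℝ), ‖u t‖ := by
    rw [← integral_const_mul]
    exact integral_mono (hTu k).norm (hu.norm.const_mul _) fun t ↦ (T k).le_opNorm (u t)
  rw [laplaceTransform_tsum (fun k ↦ ((hTu k).causalDelay _).cexp_neg_mul_smul hs)]
  · refine tsum_congr fun k ↦ ?_
    rw [laplaceTransform_causalDelay (hc k),
      (T k).laplaceTransform_comp (hu.cexp_neg_mul_smul hs)]
  · refine (hsum.mul_right (∫ t in Ioi (0 : ℝ), ‖u t‖)).of_nonneg_of_le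
      (fun k ↦ integral_nonneg fun _ ↦ norm_nonneg _) fun k ↦ ?_
    calc _ ≤ Real.exp (-s.re * c k) * ∫ t in Ioi (0 : ℝ), ‖T k (u t)‖ :=
          integral_norm_cexp_smul_causalDelay_le (hc k) hs (hTu k)
      _ ≤ Real.exp (-s.re * c k) * (‖T k‖ * ∫ t in Ioi (0 : ℝ), ‖u t‖) := by gcongr; exact hnorm k
      _ = _ := by ring

end Laplace

lemma tsum_causalDelay_eq_sum_range {E : Type*} [AddCommMonoid E] [TopologicalSpace E]
    (h : ℕ → ℝ → E) {x t : ℝ} {n : ℕ} (h₁ : (n : ℝ) + x - 1 < t) (h₂ : t ≤ n + x) :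
    ∑' k : ℕ, causalDelay (x + k) (h k) t = ∑ k ∈ Finset.range n, h k (t - (x + k)) := by
  rw [tsum_eq_sum (s := Finset.range n) fun k hk ↦ causalDelay_of_le _ ?_]
  · refine Finset.sum_congr rfl fun k hk ↦ causalDelay_of_lt _ ?_
    have : (k : ℝ) + 1 ≤ n := by exact_mod_cast Finset.mem_range.mp hk
    linarith
  · have : (n : ℝ) ≤ k := by exact_mod_cast not_lt.mp (Finset.mem_range.not.mp hk)
    linarith

lemma ae_exists_natCast_mem_Ioo (x : ℝ) :
    ∀ᵐ t, x - 1 < t → ∃ n : ℕ, (n : ℝ) + x - 1 < t ∧ t < n + x := by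
  filter_upwards [(countable_range fun n : ℕ ↦ (n : ℝ) + x).ae_notMem volume] with t ht hxt
  refine ⟨⌈t - x⌉₊, ?_, lt_of_le_of_ne (by linarith [Nat.le_ceil (t - x)]) fun h ↦ ht ⟨_, h.symm⟩⟩
  rcases le_or_gt (t - x) 0 with h | h
  · rw [Nat.ceil_eq_zero.mpr h, Nat.cast_zero]
    linarith
  · linarith [Nat.ceil_lt_add_one h.le]

lemma summable_pow_mul_exp_neg_mul_of_log_lt {a b : ℝ} (ha : 0 ≤ a) (h : Real.log a < b) :
    Summable fun k : ℕ ↦ a ^ k * Real.exp (-b * k) := by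
  have hρ : a * Real.exp (-b) < 1 := by
    rw [Real.exp_neg, ← div_eq_mul_inv, div_lt_one (Real.exp_pos b)]
    exact Real.lt_exp_of_log_lt h
  refine (summable_geometric_of_lt_one (by positivity) hρ).congr fun k ↦ ?_
  rw [mul_pow, ← Real.exp_nat_mul, mul_comm (k : ℝ)]

section LinftyOpNorm

attribute [local instance] Matrix.linftyOpNormedAddCommGroup

variable {l n α : Type*} [Fintype l] [Fintype n]

lemma Matrix.linfty_opNorm_map_ofReal_s16 (M : Matrix l n ℝ) :
    ‖M.map ((↑) : ℝ → ℂ)‖ = ‖M‖ := by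
  simp [linfty_opNorm_def]

lemma Matrix.linfty_opNorm_toContinuousLinearMap_toLin' [DecidableEq n] (M : Matrix l n ℂ) :
    ‖LinearMap.toContinuousLinearMap (Matrix.toLin' M)‖ = ‖M‖ := by
  rw [← linfty_opNorm_toMatrix, LinearMap.coe_toContinuousLinearMap, LinearMap.toMatrix'_toLin']

lemma Matrix.linfty_opNorm_pow_mul_le [NormedRing α] [DecidableEq l] (A : Matrix l l α)
    (B : Matrix l n α) (k : ℕ) : ‖A ^ k * B‖ ≤ ‖A‖ ^ k * ‖B‖ := by
  induction k with
  | zero => simp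
  | succ k ih =>
    calc ‖A ^ (k + 1) * B‖ = ‖A * (A ^ k * B)‖ := by rw [pow_succ', Matrix.mul_assoc]
      _ ≤ ‖A‖ * (‖A‖ ^ k * ‖B‖) := (linfty_opNorm_mul _ _).trans (by gcongr)
      _ = ‖A‖ ^ (k + 1) * ‖B‖ := by ring

lemma Matrix.summable_linfty_opNorm_pow_mul_mul_exp_neg [DecidableEq l] (A : Matrix l l ℝ)
    (B : Matrix l n ℝ) {b : ℝ} (h : Real.log ‖A‖ < b) (x : ℝ) :
    Summable fun k : ℕ ↦ ‖A ^ k * B‖ * Real.exp (-b * (x + k)) := by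
  refine ((summable_pow_mul_exp_neg_mul_of_log_lt (norm_nonneg _) h).mul_left
    (‖B‖ * Real.exp (-b * x))).of_nonneg_of_le (fun k ↦ by positivity) fun k ↦ ?_
  calc ‖A ^ k * B‖ * Real.exp (-b * (x + k))
      ≤ ‖A‖ ^ k * ‖B‖ * (Real.exp (-b * x) * Real.exp (-b * k)) := by
        rw [mul_add, Real.exp_add]
        gcongr
        exact linfty_opNorm_pow_mul_le A B k
    _ = _ := by ring

end LinftyOpNorm

theorem laplace_transform_boundary_feedback_part (m r : ℕ)
    (B11 : Matrix (Fin m) (Fin m) ℝ) (B12 : Matrix (Fin m) (Fin r) ℝ)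
    (w0 : ℝ → Fin r → ℝ) (hw0 : MeasureTheory.IntegrableOn w0 (Set.Ioi 0))
    (lam : ℂ) (hlam : Real.log ‖B11‖ < lam.re) (hlam' : 0 < lam.re)
    (x : ℝ) (hx : x ∈ Set.Ioo (0 : ℝ) 1)
    (F : ℝ → Fin m → ℝ)
    (hF : ∀ (t : ℝ) (n : ℕ), (n : ℝ) + x - 1 < t → t < (n : ℝ) + x →
      F t = ∑ k ∈ Finset.range n, (B11 ^ k * B12) *ᵥ w0 (t - x - (k : ℝ))) :
    (∫ t in Set.Ioi (0 : ℝ), Complex.exp (-lam * t) • (fun i => ((F t i : ℝ) : ℂ)))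
      = Complex.exp (-lam * x) •
          ∑' k : ℕ, Complex.exp (-lam * k) •
            (((B11 ^ k * B12).map (Complex.ofReal ·)) *ᵥ
              (∫ s in Set.Ioi (0 : ℝ),
                Complex.exp (-lam * s) • (fun i => ((w0 s i : ℝ) : ℂ)))) := by
  obtain ⟨hx0, hx1⟩ := hx
  set g : ℝ → Fin r → ℂ := fun s i ↦ (w0 s i : ℂ)
  set T : ℕ → (Fin r → ℂ) →L[ℂ] (Fin m → ℂ) := fun k ↦
    LinearMap.toContinuousLinearMap (Matrix.toLin' ((B11 ^ k * B12).map (↑)))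
  have hg : IntegrableOn g (Ioi 0) :=
    integrable_pi_iff.mpr fun i ↦ (integrable_pi_iff.mp hw0 i).ofReal
  have hF_ae : (fun t i ↦ (F t i : ℂ)) =ᵐ[volume.restrict (Ioi 0)]
      fun t ↦ ∑' k : ℕ, causalDelay (x + k) (fun τ ↦ T k (g τ)) t := by
    filter_upwards [ae_restrict_mem measurableSet_Ioi,
      ae_restrict_of_ae (ae_exists_natCast_mem_Ioo x)] with t ht hn
    obtain ⟨n, h₁, h₂⟩ := hn (by linarith [mem_Ioi.mp ht])
    rw [tsum_causalDelay_eq_sum_range _ h₁ h₂.le, hF t n h₁ h₂]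
    ext i
    simp only [T, g, sub_sub, Finset.sum_apply, Complex.ofReal_sum,
      LinearMap.coe_toContinuousLinearMap', Matrix.toLin'_apply]
    exact Finset.sum_congr rfl fun k _ ↦ RingHom.map_mulVec Complex.ofRealHom _ _ i
  have hsum : Summable fun k : ℕ ↦ ‖T k‖ * Real.exp (-lam.re * (x + k)) := by
    simpa only [T, Matrix.linfty_opNorm_toContinuousLinearMap_toLin',
      Matrix.linfty_opNorm_map_ofReal_s16] using
      Matrix.summable_linfty_opNorm_pow_mul_mul_exp_neg B11 B12 hlam x
  calc _ = laplaceTransform (fun t ↦ ∑' k : ℕ, causalDelay (x + k) (fun τ ↦ T k (g τ)) t) lam :=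
        integral_congr_ae (hF_ae.mono fun t ht ↦ by simp only [ht])
    _ = _ := by
      rw [laplaceTransform_tsum_causalDelay T (fun k ↦ by positivity) hlam'.le hg hsum,
        ← tsum_const_smul'']
      refine tsum_congr fun k ↦ ?_
      rw [smul_smul, ← Complex.exp_add, ← mul_add, Complex.ofReal_add, Complex.ofReal_natCast]
      rfl
end
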